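/- Define x ∼ y for x, y ⊆ [n] if sg(x) = sg(y). Then each equivalence class of ∼ is a symmetric chain in 2^[n]; explicitly, if *(x) has elements i₁ < ... < i_t, the class of x consists of the sets 1(x) ∪ {i_{u+1},...,i_t} for u = 0,...,t, where 1(x) = {i : sg(x)_i = 1}, and these have sizes (n+t)/2 − u. Consequently the equivalence classes of ∼ form a partition of 2^[n] into C(n, ⌊n/2⌋) symmetric chains. -/

import Mathlib

/-- `c_x(i,j) = |x ∩ [i,j]| - |[i,j] \ x|`. -/
def cfun (x : Finset ℕ) (i j : ℕ) : ℤ :=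
  ((Finset.Icc i j ∩ x).card : ℤ) - ((Finset.Icc i j \ x).card : ℤ)

-- The signature value of position `i` in `x ⊆ [n]`: `1`, `0`, or `2` (for `*`).
open Classical in
noncomputable def sgv (n : ℕ) (x : Finset ℕ) (i : ℕ) : ℕ :=
  if i ∈ x then (if ∃ j ∈ Finset.Ioc i n, cfun x i j = 0 then 1 else 2)
  else (if ∃ j ∈ Finset.Ico 1 i, cfun x j i = 0 then 0 else 2)

/-!
Read `x ⊆ [n]` as a word of brackets, `i ∈ x` an opening and `i ∉ x` a closing one, and let
`walk x k = c_x(1,k)` be its height profile. Then `sg(x)_i = *` exactly when `i` is unmatched: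
an element `i` is `*` iff the walk stays strictly above `walk x (i-1)` on `[i, n]`, a non-element
`i` is `*` iff `walk x i` is a strict prefix minimum. So the unmatched closing brackets all precede
the unmatched opening ones, and the class of `x` is swept out by moving the border between them:
adding the last unmatched closing bracket, or removing the first unmatched opening one, changes
no matching and hence no signature. At the bottom `1(x)` of the class the `*` are exactly the
strict prefix minima of the walk, which ends at its minimum `2|1(x)| - n`; this gives
`2|1(x)| + |*(x)| = n`. Hence every class meets the level `⌊n/2⌋` in exactly one set.
-/

open Finset

section Extrema

variable {α : Type*} [LinearOrder α]

def IsStrictPrefixMin (f : ℕ → α) (i : ℕ) : Prop := ∀ k < i, f i < f k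

def IsStrictSuffixMin (f : ℕ → α) (n k : ℕ) : Prop := ∀ j, k < j → j ≤ n → f k < f j

lemma exists_isStrictPrefixMin (f : ℕ → α) (k : ℕ) :
    ∃ m ≤ k, (∀ j ≤ k, f m ≤ f j) ∧ IsStrictPrefixMin f m := by
  induction k with
  | zero => exact ⟨0, le_rfl, fun j hj => by rw [Nat.le_zero.1 hj], fun _ h => absurd h (by omega)⟩
  | succ k ih =>
    obtain ⟨m, hmk, hmin, hm⟩ := ih
    by_cases h : f (k + 1) < f m
    · refine ⟨k + 1, le_rfl, fun j hj => ?_, fun j hj => h.trans_le (hmin j (by omega))⟩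
      rcases Nat.le_add_one_iff.1 hj with hj | rfl
      exacts [h.le.trans (hmin j hj), le_rfl]
    · refine ⟨m, by omega, fun j hj => ?_, hm⟩
      rcases Nat.le_add_one_iff.1 hj with hj | rfl
      exacts [hmin j hj, not_lt.1 h]

lemma exists_isStrictSuffixMin (f : ℕ → α) {k N : ℕ} (hkN : k ≤ N) :
    ∃ m, k ≤ m ∧ m ≤ N ∧ (∀ j, k ≤ j → j ≤ N → f m ≤ f j) ∧ IsStrictSuffixMin f N m := by
  induction N, hkN using Nat.le_induction with
  | base =>
    exact ⟨k, le_rfl, le_rfl, fun j hj hj' => by rw [le_antisymm hj' hj], fun j hj hj' => by omega⟩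
  | succ N hkN ih =>
    obtain ⟨m, hkm, hmN, hmin, hsuf⟩ := ih
    by_cases h : f (N + 1) ≤ f m
    · refine ⟨N + 1, by omega, le_rfl, fun j hj hj' => ?_, fun j hj hj' => by omega⟩
      rcases Nat.le_add_one_iff.1 hj' with hj' | rfl
      exacts [h.trans (hmin j hj hj'), le_rfl]
    · refine ⟨m, hkm, by omega, fun j hj hj' => ?_, fun j hj hj' => ?_⟩
      · rcases Nat.le_add_one_iff.1 hj' with hj' | rfl
        exacts [hmin j hj hj', (not_le.1 h).le]
      · rcases Nat.le_add_one_iff.1 hj' with hj' | rfl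
        exacts [hsuf j hj hj', not_le.1 h]

lemma IsStrictPrefixMin.le_of_no_later {f : ℕ → α} {n q k : ℕ} (hq : IsStrictPrefixMin f q)
    (hlast : ∀ p, q < p → p ≤ n → ¬ IsStrictPrefixMin f p) (hk : k ≤ n) : f q ≤ f k := by
  by_contra! h
  obtain ⟨m, hmk, hmin, hm⟩ := exists_isStrictPrefixMin f k
  have hmq : f m < f q := (hmin k le_rfl).trans_lt h
  have hqm : q < m := by
    by_contra! hmq'
    rcases hmq'.lt_or_eq with hlt | rfl
    · exact lt_asymm hmq (hq m hlt)
    · exact lt_irrefl _ hmq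
  exact hlast m hqm (hmk.trans hk) hm

end Extrema

section UnitSteps

variable {f : ℕ → ℤ}

lemma exists_mem_Icc_eq_of_sub_one_le (hf : ∀ k, f k - 1 ≤ f (k + 1)) {a b : ℕ} {v : ℤ}
    (hab : a ≤ b) (ha : v ≤ f a) (hb : f b ≤ v) : ∃ c ∈ Icc a b, f c = v := by
  induction b, hab using Nat.le_induction with
  | base => exact ⟨a, by simp, le_antisymm hb ha⟩
  | succ b hab ih =>
    by_cases h : f b ≤ v
    · obtain ⟨c, hc, hcv⟩ := ih h
      exact ⟨c, by simp at hc ⊢; omega, hcv⟩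
    · exact ⟨b + 1, by simp; omega, by have := hf b; omega⟩

open Classical in
lemma card_filter_isStrictPrefixMin (h0 : f 0 = 0) (hf : ∀ k, f k - 1 ≤ f (k + 1)) (N : ℕ) :
    (#((Icc 1 N).filter (IsStrictPrefixMin f)) : ℤ) =
      -(range (N + 1)).inf' nonempty_range_add_one f := by
  induction N with
  | zero => simp [h0]
  | succ N ih =>
    set m := (range (N + 1)).inf' nonempty_range_add_one f
    have hinf : (range (N + 1 + 1)).inf' nonempty_range_add_one f = min (f (N + 1)) m := by
      simp only [range_add_one (n := N + 1)]
      exact inf'_insert ..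
    have hrec : IsStrictPrefixMin f (N + 1) ↔ f (N + 1) < m := by
      simp [m, IsStrictPrefixMin, lt_inf'_iff]
    have hmN : m ≤ f N := inf'_le _ (by simp)
    have hstep := hf N
    rw [← insert_Icc_right_eq_Icc_add_one (by omega), filter_insert, hinf]
    split_ifs with h
    · rw [card_insert_of_notMem (by simp), min_eq_left (hrec.1 h).le]
      push_cast
      have := hrec.1 h
      omega
    · rw [min_eq_right (not_lt.1 (mt hrec.2 h)), ih]

end UnitSteps

section UpperIn

variable {α : Type*}

def IsUpperIn [LE α] (S s : Finset α) : Prop := ∀ a ∈ s, ∀ b ∈ S, a ≤ b → b ∈ s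

variable [LinearOrder α] {S s t : Finset α}

lemma IsUpperIn.total (hs : s ⊆ S) (ht : t ⊆ S) (hsu : IsUpperIn S s) (htu : IsUpperIn S t) :
    s ⊆ t ∨ t ⊆ s := by
  by_contra! h
  obtain ⟨a, has, hat⟩ := not_subset.1 h.1
  obtain ⟨b, hbt, hbs⟩ := not_subset.1 h.2
  rcases le_total a b with hab | hba
  · exact hbs (hsu a has b (ht hbt) hab)
  · exact hat (htu b hbt a (hs has) hba)

lemma IsUpperIn.eq_of_card_eq (hs : s ⊆ S) (ht : t ⊆ S) (hsu : IsUpperIn S s)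
    (htu : IsUpperIn S t) (hcard : #s = #t) : s = t := by
  rcases hsu.total hs ht htu with h | h
  · exact eq_of_subset_of_card_le h hcard.ge
  · exact (eq_of_subset_of_card_le h hcard.le).symm

lemma exists_isUpperIn_card (S : Finset α) {k : ℕ} (hk : k ≤ #S) :
    ∃ s ⊆ S, IsUpperIn S s ∧ #s = k := by
  induction S using Finset.induction_on_min generalizing k with
  | empty => exact ⟨∅, empty_subset _, by simp [IsUpperIn], by simp at hk ⊢; omega⟩
  | insert a S ha ih =>
    rw [card_insert_of_notMem (fun h => lt_irrefl a (ha a h))] at hk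
    rcases hk.lt_or_eq with hk | rfl
    · obtain ⟨s, hsS, hsu, rfl⟩ := ih (Nat.le_of_lt_succ hk)
      refine ⟨s, hsS.trans (subset_insert _ _), fun b hb c hc hbc => ?_, rfl⟩
      rcases mem_insert.1 hc with rfl | hc
      · exact absurd (ha b (hsS hb)) (not_lt.2 hbc)
      · exact hsu b hb c hc hbc
    · exact ⟨insert a S, subset_rfl, fun _ _ _ hc _ => hc,
        card_insert_of_notMem (fun h => lt_irrefl a (ha a h))⟩

end UpperIn

section Walk

def walk (x : Finset ℕ) (k : ℕ) : ℤ := cfun x 1 k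

variable {x : Finset ℕ} {n k q : ℕ}

lemma cfun_eq_sum (x : Finset ℕ) (i j : ℕ) :
    cfun x i j = ∑ k ∈ Icc i j, if k ∈ x then (1 : ℤ) else -1 := by
  rw [sum_ite, sum_const, sum_const, filter_mem_eq_inter, ← sdiff_eq_filter, cfun]
  simp [sub_eq_add_neg]

lemma walk_zero (x : Finset ℕ) : walk x 0 = 0 := by simp [walk, cfun]

lemma walk_succ (x : Finset ℕ) (k : ℕ) :
    walk x (k + 1) = walk x k + if k + 1 ∈ x then 1 else -1 := by
  rw [walk, walk, cfun_eq_sum, cfun_eq_sum, sum_Icc_succ_top (by omega)]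

lemma walk_sub_one_le (x : Finset ℕ) (k : ℕ) : walk x k - 1 ≤ walk x (k + 1) := by
  rw [walk_succ]; split <;> omega

lemma walk_succ_le (x : Finset ℕ) (k : ℕ) : walk x (k + 1) ≤ walk x k + 1 := by
  rw [walk_succ]; split <;> omega

lemma succ_mem_iff_walk_lt : k + 1 ∈ x ↔ walk x k < walk x (k + 1) := by
  rw [walk_succ]; split <;> simp_all

lemma cfun_succ_eq_walk_sub {j : ℕ} (h : k ≤ j) : cfun x (k + 1) j = walk x j - walk x k := by
  have e (a b : ℕ) : Icc (a + 1) b = Ioc a b := Icc_add_one_left_eq_Ioc a b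
  rw [walk, walk, cfun_eq_sum, cfun_eq_sum, cfun_eq_sum, e, show (1 : ℕ) = 0 + 1 from rfl, e, e,
    ← sum_Ioc_consecutive _ (Nat.zero_le k) h, add_sub_cancel_left]

lemma walk_insert (hqx : q ∉ x) (hq : 1 ≤ q) (k : ℕ) :
    walk (insert q x) k = walk x k + if q ≤ k then 2 else 0 := by
  induction k with
  | zero => simp [walk_zero]; omega
  | succ k ih =>
    rw [walk_succ, walk_succ, ih]
    by_cases h : k + 1 = q
    · subst h; simp [hqx]; ring
    · have : q ≤ k + 1 ↔ q ≤ k := by omega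
      simp only [mem_insert, h, false_or, this]
      split_ifs <;> ring

lemma walk_eq_of_subset (hx : x ⊆ Icc 1 n) : walk x n = 2 * #x - n := by
  rw [walk, cfun, inter_eq_right.2 hx, card_sdiff_of_subset hx, Nat.card_Icc,
    Nat.add_sub_cancel, Nat.cast_sub (by simpa using card_le_card hx)]
  ring

end Walk

section Signature

variable {x y : Finset ℕ} {n k : ℕ}

open Classical in
lemma sgv_succ_of_mem (h : k + 1 ∈ x) :
    sgv n x (k + 1) = if IsStrictSuffixMin (walk x) n k then 2 else 1 := by
  have hup : walk x (k + 1) = walk x k + 1 := by rw [walk_succ, if_pos h]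
  have key : (∃ j ∈ Ioc (k + 1) n, cfun x (k + 1) j = 0) ↔ ¬ IsStrictSuffixMin (walk x) n k := by
    simp only [IsStrictSuffixMin, mem_Ioc, not_forall, not_lt]
    constructor
    · rintro ⟨j, ⟨hkj, hjn⟩, hj⟩
      rw [cfun_succ_eq_walk_sub (by omega)] at hj
      exact ⟨j, by omega, hjn, by omega⟩
    · rintro ⟨j, hkj, hjn, hj⟩
      obtain ⟨c, hc, hcv⟩ := exists_mem_Icc_eq_of_sub_one_le (walk_sub_one_le x)
        (show k + 1 ≤ j by omega) (v := walk x k) (by omega) hj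
      rw [mem_Icc] at hc
      refine ⟨c, ⟨?_, by omega⟩, by rw [cfun_succ_eq_walk_sub (by omega), hcv, sub_self]⟩
      rcases hc.1.lt_or_eq with hc' | rfl <;> omega
  rw [sgv, if_pos h]
  by_cases hs : IsStrictSuffixMin (walk x) n k
  · rw [if_neg (fun h' => key.1 h' hs), if_pos hs]
  · rw [if_pos (key.2 hs), if_neg hs]

open Classical in
lemma sgv_succ_of_not_mem (h : k + 1 ∉ x) :
    sgv n x (k + 1) = if IsStrictPrefixMin (walk x) (k + 1) then 2 else 0 := by
  have hdown : walk x (k + 1) = walk x k - 1 := by rw [walk_succ, if_neg h]; ring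
  have key :
      (∃ j ∈ Ico 1 (k + 1), cfun x j (k + 1) = 0) ↔ ¬ IsStrictPrefixMin (walk x) (k + 1) := by
    simp only [IsStrictPrefixMin, mem_Ico, not_forall, not_lt]
    constructor
    · rintro ⟨j, ⟨hj1, hjk⟩, hj⟩
      obtain ⟨m, rfl⟩ : ∃ m, j = m + 1 := ⟨j - 1, by omega⟩
      rw [cfun_succ_eq_walk_sub (by omega)] at hj
      exact ⟨m, by omega, by omega⟩
    · rintro ⟨m, hmk, hm⟩
      obtain ⟨c, hc, hcv⟩ := exists_mem_Icc_eq_of_sub_one_le (f := fun i => -walk x i)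
        (fun i => by have := walk_succ_le x i; omega) (show m ≤ k by omega)
        (neg_le_neg hm) (by omega)
      rw [mem_Icc] at hc
      refine ⟨c + 1, ⟨by omega, ?_⟩, ?_⟩
      · rcases hc.2.lt_or_eq with hc' | rfl <;> omega
      · rw [cfun_succ_eq_walk_sub (by omega)]
        omega
  rw [sgv, if_neg h]
  by_cases hs : IsStrictPrefixMin (walk x) (k + 1)
  · rw [if_neg (fun h' => key.1 h' hs), if_pos hs]
  · rw [if_pos (key.2 hs), if_neg hs]

end Signature

noncomputable def ones (n : ℕ) (x : Finset ℕ) : Finset ℕ :=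
  (Icc 1 n).filter (fun i => sgv n x i = 1)

noncomputable def stars (n : ℕ) (x : Finset ℕ) : Finset ℕ :=
  (Icc 1 n).filter (fun i => sgv n x i = 2)

section OnesStars

variable {x y : Finset ℕ} {n k : ℕ}

lemma stars_subset_Icc : stars n x ⊆ Icc 1 n := filter_subset _ _

lemma succ_mem_stars_of_mem (hk : k < n) (h : k + 1 ∈ x) :
    k + 1 ∈ stars n x ↔ IsStrictSuffixMin (walk x) n k := by
  rw [stars, mem_filter, mem_Icc, sgv_succ_of_mem h]
  split_ifs <;> simp_all

lemma succ_mem_stars_of_not_mem (hk : k < n) (h : k + 1 ∉ x) :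
    k + 1 ∈ stars n x ↔ IsStrictPrefixMin (walk x) (k + 1) := by
  rw [stars, mem_filter, mem_Icc, sgv_succ_of_not_mem h]
  split_ifs <;> simp_all

lemma ones_subset_self : ones n x ⊆ x := by
  intro i hi
  by_contra h
  have := (mem_filter.1 hi).2
  rw [sgv, if_neg h] at this
  split at this <;> simp at this

lemma disjoint_ones_stars : Disjoint (ones n x) (stars n x) :=
  disjoint_filter.2 fun _ _ h1 h2 => by omega

lemma ones_union_stars_inter (hx : x ⊆ Icc 1 n) : ones n x ∪ (stars n x ∩ x) = x := by
  refine union_subset ones_subset_self inter_subset_right |>.antisymm fun i hi => ?_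
  have hsg : sgv n x i = 1 ∨ sgv n x i = 2 := by
    rw [sgv, if_pos hi]; split <;> simp
  rcases hsg with h | h
  · exact mem_union_left _ (mem_filter.2 ⟨hx hi, h⟩)
  · exact mem_union_right _ (mem_inter.2 ⟨mem_filter.2 ⟨hx hi, h⟩, hi⟩)

lemma lt_of_mem_stars {a b : ℕ} (ha : a ∈ stars n x) (hax : a ∈ x) (hb : b ∈ stars n x)
    (hbx : b ∉ x) : b < a := by
  have ha1 := mem_Icc.1 (mem_filter.1 ha).1
  have hb1 := mem_Icc.1 (mem_filter.1 hb).1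
  obtain ⟨k, rfl⟩ : ∃ k, a = k + 1 := ⟨a - 1, by omega⟩
  obtain ⟨m, rfl⟩ : ∃ m, b = m + 1 := ⟨b - 1, by omega⟩
  by_contra! hab
  have hne : k ≠ m := by rintro rfl; exact hbx hax
  have h1 := (succ_mem_stars_of_mem (by omega) hax).1 ha (m + 1) (by omega) hb1.2
  have h2 := (succ_mem_stars_of_not_mem (by omega) hbx).1 hb k (by omega)
  exact lt_asymm h1 h2

lemma isUpperIn_stars_inter : IsUpperIn (stars n x) (stars n x ∩ x) := by
  intro a ha b hb hab
  refine mem_inter.2 ⟨hb, by_contra fun hbx => ?_⟩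
  exact absurd hab (not_le.2 (lt_of_mem_stars (mem_inter.1 ha).1 (mem_inter.1 ha).2 hb hbx))

lemma ones_eq_of_eqOn (h : Set.EqOn (sgv n y) (sgv n x) (Icc 1 n)) : ones n y = ones n x :=
  filter_congr fun _ hi => by rw [h (mem_coe.2 hi)]

lemma stars_eq_of_eqOn (h : Set.EqOn (sgv n y) (sgv n x) (Icc 1 n)) : stars n y = stars n x :=
  filter_congr fun _ hi => by rw [h (mem_coe.2 hi)]

end OnesStars

section Flip

variable {x : Finset ℕ} {n q k : ℕ}

lemma isStrictSuffixMin_walk_insert_iff (hq : q ∈ Icc 1 n) (hqx : q ∉ x)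
    (hrec : IsStrictPrefixMin (walk x) q) (hkq : k + 1 ≠ q) :
    IsStrictSuffixMin (walk (insert q x)) n k ↔ IsStrictSuffixMin (walk x) n k := by
  rw [mem_Icc] at hq
  have hw := walk_insert hqx hq.1
  rcases lt_or_gt_of_ne hkq with hkq | hkq
  · have hstep := walk_sub_one_le x (q - 1)
    rw [Nat.sub_add_cancel hq.1] at hstep
    have hqk := hrec k (by omega)
    refine iff_of_false (fun h => ?_) (fun h => lt_asymm hqk (h q (by omega) hq.2))
    have := h (q - 1) (by omega) (by omega)
    rw [hw, hw, if_neg (by omega), if_neg (by omega)] at this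
    omega
  · simp only [IsStrictSuffixMin, hw, if_pos (show q ≤ k by omega)]
    refine forall_congr' fun j => imp_congr_right fun hj => ?_
    rw [if_pos (by omega), add_lt_add_iff_right]

lemma isStrictPrefixMin_walk_insert_iff (hq : 1 ≤ q) (hqx : q ∉ x)
    (hmin : ∀ k ≤ n, walk x q ≤ walk x k)
    (hlast : ∀ p, q < p → p ≤ n → ¬ IsStrictPrefixMin (walk x) p) (hk : k < n) (hkq : k + 1 ≠ q) :
    IsStrictPrefixMin (walk (insert q x)) (k + 1) ↔ IsStrictPrefixMin (walk x) (k + 1) := by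
  have hw := walk_insert hqx hq
  rcases lt_or_gt_of_ne hkq with hkq | hkq
  · simp only [IsStrictPrefixMin, hw, if_neg (show ¬ q ≤ k + 1 by omega)]
    refine forall_congr' fun j => imp_congr_right fun hj => ?_
    rw [if_neg (by omega), add_zero, add_zero]
  · refine iff_of_false (fun h => ?_) (hlast (k + 1) hkq hk)
    have := h q hkq
    rw [hw, hw, if_pos le_rfl, if_pos hkq.le] at this
    have := hmin (k + 1) hk
    omega

lemma eqOn_sgv_insert_of_isStrictPrefixMin (hq : q ∈ Icc 1 n) (hqx : q ∉ x)
    (hrec : IsStrictPrefixMin (walk x) q)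
    (hlast : ∀ p, q < p → p ≤ n → ¬ IsStrictPrefixMin (walk x) p) :
    Set.EqOn (sgv n (insert q x)) (sgv n x) (Icc 1 n) := by
  have hmin : ∀ k ≤ n, walk x q ≤ walk x k := fun k hk => hrec.le_of_no_later hlast hk
  intro i hi
  have hi' := mem_Icc.1 hi
  obtain ⟨k, rfl⟩ : ∃ k, i = k + 1 := ⟨i - 1, by omega⟩
  by_cases hkq : k + 1 = q
  · subst hkq
    rw [sgv_succ_of_mem (mem_insert_self _ _), sgv_succ_of_not_mem hqx, if_pos hrec, if_pos]
    intro j hkj hjn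
    have hw := walk_insert hqx hi'.1
    rw [hw, hw, if_neg (by omega), if_pos (by omega)]
    have hdrop : walk x (k + 1) = walk x k - 1 := by rw [walk_succ, if_neg hqx]; ring
    have := hmin j hjn
    omega
  · have hmem : k + 1 ∈ insert q x ↔ k + 1 ∈ x := by simp [hkq]
    by_cases hkx : k + 1 ∈ x
    · rw [sgv_succ_of_mem hkx, sgv_succ_of_mem (hmem.2 hkx),
        isStrictSuffixMin_walk_insert_iff hq hqx hrec hkq]
    · rw [sgv_succ_of_not_mem hkx, sgv_succ_of_not_mem (mt hmem.1 hkx),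
        isStrictPrefixMin_walk_insert_iff (mem_Icc.1 hq).1 hqx hmin hlast (by omega) hkq]

lemma not_mem_of_isStrictPrefixMin {k : ℕ} (h : IsStrictPrefixMin (walk x) (k + 1)) :
    k + 1 ∉ x := fun hx => lt_asymm (h k k.lt_succ_self) (succ_mem_iff_walk_lt.1 hx)

lemma eqOn_sgv_insert (hq : q ∈ stars n x) (hqx : q ∉ x)
    (hlast : ∀ p ∈ stars n x, q < p → p ∈ x) :
    Set.EqOn (sgv n (insert q x)) (sgv n x) (Icc 1 n) := by
  have hqI := (mem_filter.1 hq).1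
  have hq1 := mem_Icc.1 hqI
  obtain ⟨k, rfl⟩ : ∃ k, q = k + 1 := ⟨q - 1, by omega⟩
  refine eqOn_sgv_insert_of_isStrictPrefixMin hqI hqx
    ((succ_mem_stars_of_not_mem (by omega) hqx).1 hq) fun p hqp hpn hp => ?_
  obtain ⟨m, rfl⟩ : ∃ m, p = m + 1 := ⟨p - 1, by omega⟩
  have hpx := not_mem_of_isStrictPrefixMin hp
  exact hpx (hlast _ ((succ_mem_stars_of_not_mem (by omega) hpx).2 hp) hqp)

lemma eqOn_sgv_erase (hq : q ∈ stars n x) (hqx : q ∈ x)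
    (hfirst : ∀ p ∈ stars n x, p < q → p ∉ x) :
    Set.EqOn (sgv n (x.erase q)) (sgv n x) (Icc 1 n) := by
  have hqI := (mem_filter.1 hq).1
  have hq1 := mem_Icc.1 hqI
  obtain ⟨k, rfl⟩ : ∃ k, q = k + 1 := ⟨q - 1, by omega⟩
  have hsuf : IsStrictSuffixMin (walk x) n k := (succ_mem_stars_of_mem (by omega) hqx).1 hq
  have hw : ∀ j, walk x j = walk (x.erase (k + 1)) j + if k + 1 ≤ j then 2 else 0 := fun j => by
    rw [← walk_insert (notMem_erase _ _) hq1.1, insert_erase hqx]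
  have hbelow : ∀ j ≤ k, walk (x.erase (k + 1)) j = walk x j := fun j hj => by
    rw [hw, if_neg (by omega), add_zero]
  have habove : ∀ j ≥ k + 1, walk (x.erase (k + 1)) j = walk x j - 2 := fun j hj => by
    rw [hw, if_pos hj, add_sub_cancel_right]
  -- otherwise the last minimiser of `walk x` on `[j, k]` would give a `*` in `x` before `k + 1`
  have hlow : ∀ j ≤ k, walk x k ≤ walk x j := by
    intro j hj
    by_contra! hjk
    obtain ⟨m, hjm, hmk, hmin, hm⟩ := exists_isStrictSuffixMin (walk x) hj
    have hmk' : m < k := lt_of_le_of_ne hmk fun h => by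
      subst h; exact lt_irrefl _ ((hmin j le_rfl hj).trans_lt hjk)
    have hsuf' : IsStrictSuffixMin (walk x) n m := fun i hmi hin => by
      by_cases hik : i ≤ k
      · exact hm i hmi hik
      · exact (hm k hmk' le_rfl).trans (hsuf i (by omega) hin)
    have hmx : m + 1 ∈ x := succ_mem_iff_walk_lt.2 (hsuf' (m + 1) (by omega) (by omega))
    exact hfirst (m + 1) ((succ_mem_stars_of_mem (by omega) hmx).2 hsuf') (by omega) hmx
  have hup : walk x (k + 1) = walk x k + 1 := by rw [walk_succ, if_pos hqx]
  have hflip := eqOn_sgv_insert_of_isStrictPrefixMin hqI (notMem_erase _ x)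
    (fun j hj => by
      rw [habove _ le_rfl, hbelow j (by omega)]
      have := hlow j (by omega)
      omega)
    (fun p hkp hpn hp => by
      have := hp (k + 1) hkp
      rw [habove p hkp.le, habove _ le_rfl] at this
      have := hsuf p (by omega) hpn
      omega)
  rw [insert_erase hqx] at hflip
  exact hflip.symm

end Flip

section Reach

variable {x s : Finset ℕ} {n : ℕ}

lemma eqOn_sgv_ones_union_of_card_le (hx : x ⊆ Icc 1 n) (hs : s ⊆ stars n x)
    (hsu : IsUpperIn (stars n x) s) (hle : #(stars n x ∩ x) ≤ #s) :
    Set.EqOn (sgv n (ones n x ∪ s)) (sgv n x) (Icc 1 n) := by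
  obtain ⟨d, hd⟩ := Nat.exists_eq_add_of_le hle
  induction d generalizing x with
  | zero =>
    rw [← IsUpperIn.eq_of_card_eq inter_subset_left hs isUpperIn_stars_inter hsu hd.symm,
      ones_union_stars_inter hx]
    exact Set.eqOn_refl _ _
  | succ d ih =>
    have hne : (stars n x \ x).Nonempty := by
      rw [nonempty_iff_ne_empty, Ne, sdiff_eq_empty_iff_subset]
      intro h
      have := card_le_card hs
      rw [inter_eq_left.2 h] at hd
      omega
    obtain ⟨q, hqm, hqmax⟩ : ∃ q ∈ stars n x \ x, ∀ p ∈ stars n x \ x, p ≤ q :=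
      ⟨_, max'_mem _ hne, fun p hp => le_max' _ p hp⟩
    obtain ⟨hq, hqx⟩ := mem_sdiff.1 hqm
    have hflip := eqOn_sgv_insert hq hqx fun p hp hqp =>
      by_contra fun hpx => not_le.2 hqp (hqmax p (mem_sdiff.2 ⟨hp, hpx⟩))
    have hstars := stars_eq_of_eqOn hflip
    have hcard : #(stars n (insert q x) ∩ insert q x) = #(stars n x ∩ x) + 1 := by
      rw [hstars, inter_insert_of_mem hq, card_insert_of_notMem fun h => hqx (mem_inter.1 h).2]
    have := ih (insert_subset (stars_subset_Icc hq) hx) (by rwa [hstars]) (by rwa [hstars])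
      (by omega) (by omega)
    rw [ones_eq_of_eqOn hflip] at this
    exact this.trans hflip

lemma eqOn_sgv_ones_union_of_le_card (hx : x ⊆ Icc 1 n) (hs : s ⊆ stars n x)
    (hsu : IsUpperIn (stars n x) s) (hle : #s ≤ #(stars n x ∩ x)) :
    Set.EqOn (sgv n (ones n x ∪ s)) (sgv n x) (Icc 1 n) := by
  obtain ⟨d, hd⟩ := Nat.exists_eq_add_of_le hle
  induction d generalizing x with
  | zero =>
    rw [IsUpperIn.eq_of_card_eq hs inter_subset_left hsu isUpperIn_stars_inter hd.symm,
      ones_union_stars_inter hx]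
    exact Set.eqOn_refl _ _
  | succ d ih =>
    have hne : (stars n x ∩ x).Nonempty := by
      rw [← card_pos]; omega
    obtain ⟨q, hqm, hqmin⟩ : ∃ q ∈ stars n x ∩ x, ∀ p ∈ stars n x ∩ x, q ≤ p :=
      ⟨_, min'_mem _ hne, fun p hp => min'_le _ p hp⟩
    obtain ⟨hq, hqx⟩ := mem_inter.1 hqm
    have hflip := eqOn_sgv_erase hq hqx fun p hp hpq hpx =>
      not_le.2 hpq (hqmin p (mem_inter.2 ⟨hp, hpx⟩))
    have hstars := stars_eq_of_eqOn hflip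
    have hcard : #(stars n (x.erase q) ∩ x.erase q) + 1 = #(stars n x ∩ x) := by
      rw [hstars, inter_erase, card_erase_add_one hqm]
    have := ih ((erase_subset _ _).trans hx) (by rwa [hstars]) (by rwa [hstars])
      (by omega) (by omega)
    rw [ones_eq_of_eqOn hflip] at this
    exact this.trans hflip

lemma eqOn_sgv_ones_union (hx : x ⊆ Icc 1 n) (hs : s ⊆ stars n x)
    (hsu : IsUpperIn (stars n x) s) : Set.EqOn (sgv n (ones n x ∪ s)) (sgv n x) (Icc 1 n) :=
  (le_total #(stars n x ∩ x) #s).elim (eqOn_sgv_ones_union_of_card_le hx hs hsu)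
    (eqOn_sgv_ones_union_of_le_card hx hs hsu)

end Reach

section Classes

variable {x y : Finset ℕ} {n : ℕ}

def sgClass (n : ℕ) (x : Finset ℕ) : Set (Finset ℕ) :=
  {y | y ⊆ Icc 1 n ∧ Set.EqOn (sgv n y) (sgv n x) (Icc 1 n)}

lemma mem_sgClass_self (hy : y ⊆ Icc 1 n) : y ∈ sgClass n y := ⟨hy, Set.eqOn_refl _ _⟩

lemma sgClass_eq_of_mem (h : y ∈ sgClass n x) : sgClass n y = sgClass n x :=
  Set.ext fun _ => ⟨fun hz => ⟨hz.1, hz.2.trans h.2⟩, fun hz => ⟨hz.1, hz.2.trans h.2.symm⟩⟩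

lemma mem_sgClass_iff (hx : x ⊆ Icc 1 n) :
    y ∈ sgClass n x ↔ ∃ s ⊆ stars n x, IsUpperIn (stars n x) s ∧ y = ones n x ∪ s := by
  constructor
  · rintro ⟨hy, h⟩
    rw [← stars_eq_of_eqOn h, ← ones_eq_of_eqOn h]
    exact ⟨stars n y ∩ y, inter_subset_left, isUpperIn_stars_inter,
      (ones_union_stars_inter hy).symm⟩
  · rintro ⟨s, hs, hsu, rfl⟩
    exact ⟨union_subset (filter_subset _ _) (hs.trans stars_subset_Icc),
      eqOn_sgv_ones_union hx hs hsu⟩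

lemma isChain_sgClass (hx : x ⊆ Icc 1 n) : IsChain (· ⊆ ·) (sgClass n x) := by
  intro y₁ h₁ y₂ h₂ _
  obtain ⟨s₁, hs₁, hsu₁, rfl⟩ := (mem_sgClass_iff hx).1 h₁
  obtain ⟨s₂, hs₂, hsu₂, rfl⟩ := (mem_sgClass_iff hx).1 h₂
  exact (hsu₁.total hs₁ hs₂ hsu₂).imp union_subset_union_right union_subset_union_right

lemma two_mul_card_add_card_stars_of_disjoint (hx : x ⊆ Icc 1 n) (hd : Disjoint (stars n x) x) :
    2 * #x + #(stars n x) = n := by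
  classical
  have hstars : stars n x = (Icc 1 n).filter (IsStrictPrefixMin (walk x)) := by
    refine filter_congr fun i hi => ?_
    have hi' := mem_Icc.1 hi
    obtain ⟨k, rfl⟩ : ∃ k, i = k + 1 := ⟨i - 1, by omega⟩
    by_cases hkx : k + 1 ∈ x
    · exact iff_of_false (fun h => disjoint_left.1 hd (mem_filter.2 ⟨hi, h⟩) hkx)
        (fun h => not_mem_of_isStrictPrefixMin h hkx)
    · rw [← succ_mem_stars_of_not_mem (n := n) (by omega) hkx, stars, mem_filter, and_iff_right hi]
  have hmin : ∀ k ≤ n, walk x n ≤ walk x k := by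
    intro k hk
    by_contra! h
    obtain ⟨m, hkm, hmn, hmin, hm⟩ := exists_isStrictSuffixMin (walk x) hk
    have hmn' : m < n := lt_of_le_of_ne hmn fun h' => by
      subst h'; exact lt_irrefl _ ((hmin k le_rfl hk).trans_lt h)
    have hmx : m + 1 ∈ x := succ_mem_iff_walk_lt.2 (hm (m + 1) (by omega) (by omega))
    exact disjoint_left.1 hd ((succ_mem_stars_of_mem hmn' hmx).2 hm) hmx
  have hinf : (range (n + 1)).inf' nonempty_range_add_one (walk x) = walk x n :=
    le_antisymm (inf'_le _ (by simp)) (le_inf' _ _ fun k hk => hmin k (by simpa using hk))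
  have := card_filter_isStrictPrefixMin (walk_zero x) (walk_sub_one_le x) n
  rw [← hstars, hinf, walk_eq_of_subset hx] at this
  omega

lemma two_mul_card_ones_add_card_stars (hx : x ⊆ Icc 1 n) :
    2 * #(ones n x) + #(stars n x) = n := by
  have h := eqOn_sgv_ones_union hx (empty_subset _) (by simp [IsUpperIn])
  rw [union_empty] at h
  rw [← stars_eq_of_eqOn h]
  refine two_mul_card_add_card_stars_of_disjoint (filter_subset _ _) ?_
  rw [stars_eq_of_eqOn h]
  exact disjoint_ones_stars.symm

lemma exists_mem_sgClass_card (hx : x ⊆ Icc 1 n) {k : ℕ} (h₁ : #(ones n x) ≤ k)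
    (h₂ : k ≤ #(ones n x) + #(stars n x)) : ∃ y ∈ sgClass n x, #y = k := by
  obtain ⟨s, hs, hsu, hcard⟩ := exists_isUpperIn_card (stars n x) (k := k - #(ones n x)) (by omega)
  refine ⟨ones n x ∪ s, (mem_sgClass_iff hx).2 ⟨s, hs, hsu, rfl⟩, ?_⟩
  rw [card_union_of_disjoint (disjoint_ones_stars.mono_right hs), hcard]
  omega

lemma card_sgClasses (n : ℕ) :
    Nat.card {C : Set (Finset ℕ) // ∃ z ⊆ Icc 1 n, C = sgClass n z} = n.choose (n / 2) := by
  let f : powersetCard (n / 2) (Icc 1 n) → {C : Set (Finset ℕ) // ∃ z ⊆ Icc 1 n, C = sgClass n z} :=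
    fun y => ⟨sgClass n y, y, (mem_powersetCard.1 y.2).1, rfl⟩
  have hf : Function.Bijective f := by
    constructor
    · rintro ⟨y₁, hy₁⟩ ⟨y₂, hy₂⟩ h
      have hcls : sgClass n y₁ = sgClass n y₂ := congrArg Subtype.val h
      rw [mem_powersetCard] at hy₁ hy₂
      have hmem : y₁ ∈ sgClass n y₂ := hcls ▸ mem_sgClass_self hy₁.1
      refine Subtype.ext (show y₁ = y₂ from ?_)
      rcases (isChain_sgClass hy₂.1).total hmem (mem_sgClass_self hy₂.1) with h | h
      · exact eq_of_subset_of_card_le h (by omega)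
      · exact (eq_of_subset_of_card_le h (by omega)).symm
    · rintro ⟨C, z, hz, rfl⟩
      have := two_mul_card_ones_add_card_stars hz
      obtain ⟨y, hy, hcard⟩ := exists_mem_sgClass_card hz (k := n / 2) (by omega) (by omega)
      exact ⟨⟨y, mem_powersetCard.2 ⟨hy.1, hcard⟩⟩, Subtype.ext (sgClass_eq_of_mem hy)⟩
  rw [← Nat.card_eq_of_bijective f hf, Nat.card_eq_finsetCard, card_powersetCard, Nat.card_Icc,
    Nat.add_sub_cancel]

end Classes

/-- the equivalence class of `x` under "equal signature" is exactly
the family `1(x) ∪ s` for `s` an up-set of `*(x)`; `1(x)` and `*(x)` are disjoint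
with `2|1(x)| + |*(x)| = n` (so the member corresponding to an up-set of size
`t - u` has size `(n+t)/2 - u`); each class is a chain; and the classes form a
partition of `2^[n]` into `C(n,⌊n/2⌋)` symmetric chains. -/
theorem stmt_11 (n : ℕ) (x : Finset ℕ) (hx : x ⊆ Finset.Icc 1 n) :
    ({y : Finset ℕ | y ⊆ Finset.Icc 1 n ∧ ∀ i ∈ Finset.Icc 1 n, sgv n y i = sgv n x i} =
      {y : Finset ℕ | ∃ s ⊆ (Finset.Icc 1 n).filter (fun i => sgv n x i = 2),
        (∀ a ∈ s, ∀ b ∈ (Finset.Icc 1 n).filter (fun i => sgv n x i = 2), a ≤ b → b ∈ s) ∧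
        y = (Finset.Icc 1 n).filter (fun i => sgv n x i = 1) ∪ s}) ∧
    Disjoint ((Finset.Icc 1 n).filter (fun i => sgv n x i = 1))
      ((Finset.Icc 1 n).filter (fun i => sgv n x i = 2)) ∧
    2 * ((Finset.Icc 1 n).filter (fun i => sgv n x i = 1)).card +
      ((Finset.Icc 1 n).filter (fun i => sgv n x i = 2)).card = n ∧
    IsChain (· ⊆ ·)
      {y : Finset ℕ | y ⊆ Finset.Icc 1 n ∧ ∀ i ∈ Finset.Icc 1 n, sgv n y i = sgv n x i} ∧
    Nat.card {C : Set (Finset ℕ) // ∃ z ⊆ Finset.Icc 1 n,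
        C = {y : Finset ℕ | y ⊆ Finset.Icc 1 n ∧
          ∀ i ∈ Finset.Icc 1 n, sgv n y i = sgv n z i}} = n.choose (n / 2) :=
  ⟨Set.ext fun _ => mem_sgClass_iff hx, disjoint_ones_stars, two_mul_card_ones_add_card_stars hx,
    isChain_sgClass hx, card_sgClasses n⟩
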